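/- arXiv:1411.5184 — 3 statements merged into one kernel-verified Lean document; each statement's English description precedes it below -/
import Mathlib

section
/- If G is a finite connected simple graph without isolated vertices, then Dom has a winning strategy in the Sepy-start Disjoint Domination Game on G. -/
namespace DDG

variable {V : Type*}

/-- The closed neighborhood `N[v]` of a vertex `v`. -/
def closedNbhd (G : SimpleGraph V) (v : V) : Set V := insert v (G.neighborSet v)

/-- `D` is a dominating set of `G`: every vertex has a member of `D`
in its closed neighborhood. -/
def Dominates (G : SimpleGraph V) (D : Set V) : Prop :=
  ∀ v : V, (closedNbhd G v ∩ D).Nonempty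

/-- A position of the game: the sets of purple and blue vertices. -/
structure Pos (V : Type*) where
  purple : Set V
  blue : Set V

namespace Pos

/-- The vertex class of a color (`true` = purple, `false` = blue). -/
def colorSet (p : Pos V) (c : Bool) : Set V := if c then p.purple else p.blue

/-- The position obtained by coloring vertex `v` with color `c`. -/
def play (p : Pos V) (v : V) (c : Bool) : Pos V :=
  if c then ⟨insert v p.purple, p.blue⟩ else ⟨p.purple, insert v p.blue⟩

end Pos

/-- A legal move of the Disjoint Domination Game: select an uncolored vertex `v`
and a color `c` such that some `u ∈ N[v]` is not yet dominated in color `c`. -/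
def LegalMove (G : SimpleGraph V) (p : Pos V) (v : V) (c : Bool) : Prop :=
  v ∉ p.purple ∪ p.blue ∧ ∃ u ∈ closedNbhd G v, closedNbhd G u ∩ p.colorSet c = ∅

/-- End condition ⟨s⟩: some closed neighborhood is monochromatic; Sepy wins. -/
def SepyEnd (G : SimpleGraph V) (p : Pos V) : Prop :=
  ∃ v : V, closedNbhd G v ⊆ p.purple ∨ closedNbhd G v ⊆ p.blue

/-- End condition ⟨d⟩: both color classes are dominating sets; Dom wins. -/
def DomEnd (G : SimpleGraph V) (p : Pos V) : Prop :=
  Dominates G p.purple ∧ Dominates G p.blue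

/-- `DomWins G turn p` : Dom has a winning strategy in the Disjoint Domination Game
from position `p`, where `turn = true` iff it is Dom's move. -/
inductive DomWins (G : SimpleGraph V) : Bool → Pos V → Prop
  | terminal (turn : Bool) (p : Pos V) :
      ¬ SepyEnd G p → DomEnd G p → DomWins G turn p
  | domStep (p : Pos V) (v : V) (c : Bool) :
      ¬ SepyEnd G p → ¬ DomEnd G p → LegalMove G p v c →
      DomWins G false (p.play v c) → DomWins G true p
  | sepyStep (p : Pos V) :
      ¬ SepyEnd G p → ¬ DomEnd G p →
      (∃ v c, LegalMove G p v c) →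
      (∀ v c, LegalMove G p v c → DomWins G true (p.play v c)) →
      DomWins G false p

/-- `SepyWins G turn p` : Sepy has a winning strategy in the Disjoint Domination Game
from position `p`, where `turn = true` iff it is Dom's move. -/
inductive SepyWins (G : SimpleGraph V) : Bool → Pos V → Prop
  | terminal (turn : Bool) (p : Pos V) : SepyEnd G p → SepyWins G turn p
  | sepyStep (p : Pos V) (v : V) (c : Bool) :
      ¬ SepyEnd G p → ¬ DomEnd G p → LegalMove G p v c →
      SepyWins G true (p.play v c) → SepyWins G false p
  | domStep (p : Pos V) :
      ¬ SepyEnd G p → ¬ DomEnd G p →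
      (∃ v c, LegalMove G p v c) →
      (∀ v c, LegalMove G p v c → SepyWins G false (p.play v c)) →
      SepyWins G true p

end DDG


open DDG


/-!
Dom keeps the position *balanced*: the two color classes are disjoint and every colored vertex
has a neighbor of the other color. A balanced position has no monochromatic closed
neighborhood. After Sepy colors `x` with `c`, either `x` already has a neighbor of color `!c`,
and the position is balanced again, or Dom colors an uncolored neighbor `z` of `x` with `!c`,
pairing `x` with `z`. In the first case Dom must still make a move that keeps the balance,
i.e. color some `y` so that `y` has a neighbor of the opposite color. If no such legal move
existed, then the closed neighborhood of a vertex that is not yet dominated by one color would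
be entirely uncolored, and this property would spread along the edges; by connectivity it would
reach the colored vertex `x`.
-/

theorem SimpleGraph.Preconnected.mem_of_adj_closed {V : Type*} {G : SimpleGraph V} {s : Set V}
    (hG : G.Preconnected) (hs : ∀ u v, G.Adj u v → u ∈ s → v ∈ s) {u : V} (hu : u ∈ s)
    (v : V) : v ∈ s := by
  obtain ⟨w⟩ := hG u v
  induction w with
  | nil => exact hu
  | cons h _ ih => exact ih (hs _ _ h hu)

namespace DDG

variable {V : Type*} {G : SimpleGraph V}

section closedNbhd

variable {u v w : V} {s : Set V}

theorem mem_closedNbhd_iff : u ∈ closedNbhd G v ↔ u = v ∨ G.Adj v u := by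
  simp [closedNbhd]

theorem self_mem_closedNbhd (G : SimpleGraph V) (v : V) : v ∈ closedNbhd G v :=
  Set.mem_insert _ _

theorem mem_closedNbhd_of_adj (h : G.Adj v u) : u ∈ closedNbhd G v :=
  mem_closedNbhd_iff.mpr (.inr h)

theorem mem_closedNbhd_comm : u ∈ closedNbhd G v ↔ v ∈ closedNbhd G u := by
  rw [mem_closedNbhd_iff, mem_closedNbhd_iff, G.adj_comm, eq_comm]

theorem notMem_of_closedNbhd_inter_eq_empty (h : closedNbhd G u ∩ s = ∅)
    (hw : w ∈ closedNbhd G u) : w ∉ s :=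
  fun hs => Set.eq_empty_iff_forall_notMem.mp h w ⟨hw, hs⟩

theorem closedNbhd_inter_eq_empty_iff :
    closedNbhd G u ∩ s = ∅ ↔ ∀ w ∈ closedNbhd G u, w ∉ s := by
  simp [Set.eq_empty_iff_forall_notMem]

end closedNbhd

namespace Pos

variable {p : Pos V} {u v : V} {c d : Bool}

def colored (p : Pos V) : Set V := p.purple ∪ p.blue

theorem mem_colorSet_play :
    u ∈ (p.play v c).colorSet d ↔ u = v ∧ d = c ∨ u ∈ p.colorSet d := by
  cases c <;> cases d <;> simp [play, colorSet]

theorem colorSet_subset_colorSet_play (p : Pos V) (v : V) (c d : Bool) :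
    p.colorSet d ⊆ (p.play v c).colorSet d :=
  fun _ hu => mem_colorSet_play.mpr (.inr hu)

theorem colorSet_play_not (p : Pos V) (v : V) (c : Bool) :
    (p.play v c).colorSet (!c) = p.colorSet (!c) := by
  ext u; simp [mem_colorSet_play]

theorem mem_colored_iff : v ∈ p.colored ↔ ∃ c, v ∈ p.colorSet c := by
  simp [colored, colorSet, or_comm]

theorem mem_colored_iff_or (c : Bool) :
    v ∈ p.colored ↔ v ∈ p.colorSet c ∨ v ∈ p.colorSet (!c) := by
  cases c <;> simp [colored, colorSet, or_comm]

theorem colorSet_subset_colored (p : Pos V) (c : Bool) : p.colorSet c ⊆ p.colored :=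
  fun _ hv => mem_colored_iff.mpr ⟨c, hv⟩

theorem colored_play (p : Pos V) (v : V) (c : Bool) :
    (p.play v c).colored = insert v p.colored := by
  ext u; simp [mem_colored_iff, mem_colorSet_play, exists_or]

theorem disjoint_play (h : Disjoint p.purple p.blue) (hv : v ∉ p.colored) (c : Bool) :
    Disjoint (p.play v c).purple (p.play v c).blue := by
  simp only [colored, Set.mem_union, not_or] at hv
  cases c <;> simp [play, h, hv.1, hv.2]

theorem notMem_colorSet_not (h : Disjoint p.purple p.blue) (hv : v ∈ p.colorSet c) :
    v ∉ p.colorSet (!c) := by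
  cases c
  · exact Set.disjoint_right.mp h hv
  · exact Set.disjoint_left.mp h hv

theorem ncard_compl_colored_play_lt [Finite V] (hv : v ∉ p.colored) (c : Bool) :
    (p.play v c).coloredᶜ.ncard < p.coloredᶜ.ncard := by
  refine Set.ncard_lt_ncard ?_
  rw [colored_play, Set.ssubset_iff_of_subset (Set.compl_subset_compl.mpr (Set.subset_insert _ _))]
  exact ⟨v, hv, by simp⟩

end Pos

variable {p : Pos V} {x y z : V} {c d : Bool}

theorem sepyEnd_iff : SepyEnd G p ↔ ∃ u c, closedNbhd G u ⊆ p.colorSet c := by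
  simp [SepyEnd, Pos.colorSet, Bool.exists_bool, or_comm]

theorem domEnd_iff : DomEnd G p ↔ ∀ c, Dominates G (p.colorSet c) := by
  simp [DomEnd, Pos.colorSet, Bool.forall_bool, and_comm]

theorem SepyEnd.play (h : SepyEnd G p) (v : V) (c : Bool) : SepyEnd G (p.play v c) := by
  obtain ⟨u, d, hu⟩ := sepyEnd_iff.mp h
  exact sepyEnd_iff.mpr ⟨u, d, hu.trans (p.colorSet_subset_colorSet_play v c d)⟩

theorem exists_closedNbhd_inter_eq_empty (hD : ¬ DomEnd G p) :
    ∃ c u, closedNbhd G u ∩ p.colorSet c = ∅ := by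
  by_contra! h
  exact hD (domEnd_iff.mpr fun c v => h c v)

theorem exists_legalMove (hS : ¬ SepyEnd G p) (hD : ¬ DomEnd G p) :
    ∃ v c, LegalMove G p v c := by
  obtain ⟨c, u, hu⟩ := exists_closedNbhd_inter_eq_empty hD
  obtain ⟨v, hvu, hv⟩ : ∃ v ∈ closedNbhd G u, v ∉ p.colored := by
    by_contra! h
    refine hS (sepyEnd_iff.mpr ⟨u, !c, fun w hw => ?_⟩)
    exact ((Pos.mem_colored_iff_or c).mp (h w hw)).resolve_left
      (notMem_of_closedNbhd_inter_eq_empty hu hw)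
  exact ⟨v, c, hv, u, mem_closedNbhd_comm.mp hvu, hu⟩

theorem LegalMove.exists_adj_notMem (hiso : ∀ v : V, ∃ u : V, G.Adj v u)
    (h : LegalMove G p x c) : ∃ z, G.Adj x z ∧ z ∉ p.colorSet c := by
  obtain ⟨-, w, hw, hwc⟩ := h
  rcases mem_closedNbhd_iff.mp hw with rfl | hxw
  · obtain ⟨z, hz⟩ := hiso w
    exact ⟨z, hz, notMem_of_closedNbhd_inter_eq_empty hwc (mem_closedNbhd_of_adj hz)⟩
  · exact ⟨w, hxw, notMem_of_closedNbhd_inter_eq_empty hwc (self_mem_closedNbhd G w)⟩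

structure Balanced (G : SimpleGraph V) (p : Pos V) : Prop where
  disjoint : Disjoint p.purple p.blue
  exists_adj_opposite : ∀ c, ∀ v ∈ p.colorSet c, ∃ u, G.Adj v u ∧ u ∈ p.colorSet (!c)

namespace Balanced

theorem empty (G : SimpleGraph V) : Balanced G ⟨∅, ∅⟩ where
  disjoint := by simp
  exists_adj_opposite c v hv := by cases c <;> simp [Pos.colorSet] at hv

theorem not_sepyEnd (hp : Balanced G p) : ¬ SepyEnd G p := by
  intro h
  obtain ⟨v, c, hv⟩ := sepyEnd_iff.mp h
  obtain ⟨u, hvu, hu⟩ := hp.exists_adj_opposite c v (hv (self_mem_closedNbhd G v))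
  exact Pos.notMem_colorSet_not hp.disjoint (hv (mem_closedNbhd_of_adj hvu)) hu

theorem play (hp : Balanced G p) (hy : y ∉ p.colored) (hyz : G.Adj y z)
    (hz : z ∈ p.colorSet (!d)) : Balanced G (p.play y d) where
  disjoint := Pos.disjoint_play hp.disjoint hy d
  exists_adj_opposite c v hv := by
    rcases Pos.mem_colorSet_play.mp hv with ⟨rfl, rfl⟩ | hv
    · exact ⟨z, hyz, Pos.colorSet_subset_colorSet_play _ _ _ _ hz⟩
    · obtain ⟨u, hvu, hu⟩ := hp.exists_adj_opposite c v hv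
      exact ⟨u, hvu, Pos.colorSet_subset_colorSet_play _ _ _ _ hu⟩

theorem play_play (hp : Balanced G p) (hx : x ∉ p.colored) (hz : z ∉ p.colored)
    (hxz : G.Adj x z) (c : Bool) : Balanced G ((p.play x c).play z (!c)) where
  disjoint := by
    refine Pos.disjoint_play (Pos.disjoint_play hp.disjoint hx c) ?_ (!c)
    simpa [Pos.colored_play, hxz.ne.symm] using hz
  exists_adj_opposite d v hv := by
    simp only [Pos.mem_colorSet_play] at hv ⊢
    rcases hv with ⟨rfl, rfl⟩ | ⟨rfl, rfl⟩ | hv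
    · exact ⟨x, hxz.symm, by simp⟩
    · exact ⟨z, hxz, by simp⟩
    · obtain ⟨u, hvu, hu⟩ := hp.exists_adj_opposite d v hv
      exact ⟨u, hvu, .inr (.inr hu)⟩

theorem exists_legalMove_adj_opposite (hconn : G.Preconnected) (hp : Balanced G p)
    (hD : ¬ DomEnd G p) (hx : x ∈ p.colored) :
    ∃ y d, LegalMove G p y d ∧ ∃ o, G.Adj y o ∧ o ∈ p.colorSet (!d) := by
  by_contra! H
  let blank : Set V := {u | ∀ w ∈ closedNbhd G u, w ∉ p.colored}
  have blank_nonempty : ∃ u, u ∈ blank := by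
    obtain ⟨d, u, hu⟩ := exists_closedNbhd_inter_eq_empty hD
    -- a vertex of color `!d` has a neighbor of color `d`, which would dominate `u`
    have hu_not : u ∉ p.colorSet (!d) := fun h => by
      obtain ⟨o, huo, ho⟩ := hp.exists_adj_opposite _ u h
      exact notMem_of_closedNbhd_inter_eq_empty hu (mem_closedNbhd_of_adj huo)
        (by simpa using ho)
    have hu_col : u ∉ p.colored := by
      rw [Pos.mem_colored_iff_or d, not_or]
      exact ⟨notMem_of_closedNbhd_inter_eq_empty hu (self_mem_closedNbhd G u), hu_not⟩
    refine ⟨u, fun w hw => ?_⟩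
    rcases mem_closedNbhd_iff.mp hw with rfl | huw
    · exact hu_col
    rw [Pos.mem_colored_iff_or d, not_or]
    exact ⟨notMem_of_closedNbhd_inter_eq_empty hu hw,
      H u d ⟨hu_col, u, self_mem_closedNbhd G u, hu⟩ w huw⟩
  have blank_adj_closed : ∀ u y, G.Adj u y → u ∈ blank → y ∈ blank := by
    intro u y huy hu w hw hw_col
    have hy : y ∉ p.colored := hu y (mem_closedNbhd_of_adj huy)
    rcases mem_closedNbhd_iff.mp hw with rfl | hyw
    · exact hy hw_col
    obtain ⟨e, he⟩ := Pos.mem_colored_iff.mp hw_col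
    have hlegal : LegalMove G p y (!e) := by
      refine ⟨hy, u, mem_closedNbhd_comm.mp (mem_closedNbhd_of_adj huy), ?_⟩
      exact closedNbhd_inter_eq_empty_iff.mpr fun v hv => fun h =>
        hu v hv (Pos.colorSet_subset_colored p _ h)
    exact H y (!e) hlegal w hyw (by simpa using he)
  obtain ⟨u, hu⟩ := blank_nonempty
  exact hconn.mem_of_adj_closed blank_adj_closed hu x x (self_mem_closedNbhd G x) hx

theorem play_or_exists_play_play (hiso : ∀ v : V, ∃ u : V, G.Adj v u) (hp : Balanced G p)
    (hl : LegalMove G p x c) :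
    Balanced G (p.play x c) ∨
      ∃ z, LegalMove G (p.play x c) z (!c) ∧ Balanced G ((p.play x c).play z (!c)) := by
  by_cases hb : ∃ b, G.Adj x b ∧ b ∈ p.colorSet (!c)
  · obtain ⟨b, hxb, hb⟩ := hb
    exact .inl (hp.play hl.1 hxb hb)
  simp only [not_exists, not_and] at hb
  obtain ⟨z, hxz, hzc⟩ := hl.exists_adj_notMem hiso
  have hz : z ∉ p.colored := by
    rw [Pos.mem_colored_iff_or c, not_or]
    exact ⟨hzc, hb z hxz⟩
  have hx_free : closedNbhd G x ∩ (p.play x c).colorSet (!c) = ∅ := by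
    rw [Pos.colorSet_play_not, closedNbhd_inter_eq_empty_iff]
    intro w hw
    rcases mem_closedNbhd_iff.mp hw with rfl | hxw
    · exact fun h => hl.1 (Pos.colorSet_subset_colored p _ h)
    · exact hb w hxw
  have hz' : z ∉ (p.play x c).colored := by
    simpa [Pos.colored_play, hxz.ne.symm] using hz
  exact .inr ⟨z, ⟨hz', x, mem_closedNbhd_of_adj hxz.symm, hx_free⟩,
    hp.play_play hl.1 hz hxz c⟩

theorem not_sepyEnd_play (hiso : ∀ v : V, ∃ u : V, G.Adj v u) (hp : Balanced G p)
    (hl : LegalMove G p x c) : ¬ SepyEnd G (p.play x c) := by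
  rcases hp.play_or_exists_play_play hiso hl with hq | ⟨z, -, hr⟩
  · exact hq.not_sepyEnd
  · exact fun h => hr.not_sepyEnd (h.play z (!c))

theorem exists_balanced_reply (hconn : G.Preconnected) (hiso : ∀ v : V, ∃ u : V, G.Adj v u)
    (hp : Balanced G p) (hl : LegalMove G p x c) (hD : ¬ DomEnd G (p.play x c)) :
    ∃ y d, LegalMove G (p.play x c) y d ∧ Balanced G ((p.play x c).play y d) := by
  rcases hp.play_or_exists_play_play hiso hl with hq | ⟨z, hlz, hr⟩
  · have hx : x ∈ (p.play x c).colored := by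
      rw [Pos.colored_play]
      exact Set.mem_insert _ _
    obtain ⟨y, d, hly, o, hyo, ho⟩ := hq.exists_legalMove_adj_opposite hconn hD hx
    exact ⟨y, d, hly, hq.play hly.1 hyo ho⟩
  · exact ⟨z, !c, hlz, hr⟩

theorem domWins [Finite V] (hconn : G.Preconnected) (hiso : ∀ v : V, ∃ u : V, G.Adj v u)
    {p : Pos V} (hp : Balanced G p) : DomWins G false p := by
  by_cases hD : DomEnd G p
  · exact .terminal _ _ hp.not_sepyEnd hD
  refine .sepyStep p hp.not_sepyEnd hD (exists_legalMove hp.not_sepyEnd hD) fun x c hl => ?_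
  have hS := hp.not_sepyEnd_play hiso hl
  by_cases hDq : DomEnd G (p.play x c)
  · exact .terminal _ _ hS hDq
  obtain ⟨y, d, hly, hr⟩ := hp.exists_balanced_reply hconn hiso hl hDq
  exact .domStep _ y d hS hDq hly (hr.domWins hconn hiso)
termination_by p.coloredᶜ.ncard
decreasing_by
  exact (Pos.ncard_compl_colored_play_lt hly.1 d).trans (Pos.ncard_compl_colored_play_lt hl.1 c)

end Balanced

end DDG

/-- Theorem 3 of the paper: on every finite connected isolate-free
graph, Dom has a winning strategy in the Sepy-start Disjoint Domination Game. -/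
theorem statement2 {V : Type*} [Fintype V] (G : SimpleGraph V)
    (hconn : G.Connected) (hiso : ∀ v : V, ∃ u : V, G.Adj v u) :
    DomWins G false ⟨∅, ∅⟩ :=
  (Balanced.empty G).domWins hconn.preconnected hiso
end

section
/- Let G be a finite simple graph without isolated vertices, let V_purple, V_blue be disjoint sets of vertices, let C be the vertex set of a connected component of G, let c ∈ {purple, blue} be a color, and suppose there exists a vertex u ∈ C with u ∉ V_purple ∪ V_blue such that after adding u to V_c every vertex of C is dominated in both colors (for every w ∈ C, N[w] meets the complementary color class and N[w] meets V_c ∪ {u}). Then for every pair of disjoint vertex sets (V_purple', V_blue') obtained from (V_purple, V_blue) by a finite sequence of legal moves of the Disjoint Domination Game, no vertex w ∈ C satisfies N[w] ⊆ V_purple' or N[w] ⊆ V_blue'. -/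
namespace DDG
/-- One legal move of the Disjoint Domination Game transforms `p` into `q`. -/
def Step (G : SimpleGraph V) (p q : Pos V) : Prop :=
  ∃ v c, LegalMove G p v c ∧ q = p.play v c

/-- `q` is obtained from `p` by a finite sequence of legal moves. -/
def Reach (G : SimpleGraph V) : Pos V → Pos V → Prop :=
  Relation.ReflTransGen (Step G)
end DDG

open DDG



namespace DDG

variable {V : Type*}

lemma mem_supp_of_mem_closedNbhd {G : SimpleGraph V} {K : G.ConnectedComponent}
    {w x : V} (hw : w ∈ K.supp) (hx : x ∈ closedNbhd G w) : x ∈ K.supp := by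
  rcases hx with rfl | hx
  · exact hw
  · simp only [SimpleGraph.ConnectedComponent.mem_supp_iff] at hw ⊢
    rw [← hw]
    exact SimpleGraph.ConnectedComponent.eq.mpr (G.adj_symm hx).reachable

lemma play_true (p : Pos V) (v : V) : p.play v true = ⟨insert v p.purple, p.blue⟩ := rfl
lemma play_false (p : Pos V) (v : V) : p.play v false = ⟨p.purple, insert v p.blue⟩ := rfl
lemma colorSet_true (p : Pos V) : p.colorSet true = p.purple := rfl
lemma colorSet_false (p : Pos V) : p.colorSet false = p.blue := rfl

lemma play_colorSet_self (p : Pos V) (v : V) (b : Bool) :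
    (p.play v b).colorSet b = insert v (p.colorSet b) := by
  cases b <;> rfl

lemma play_colorSet_ne (p : Pos V) (v : V) {b b' : Bool} (h : b' ≠ b) :
    (p.play v b).colorSet b' = p.colorSet b' := by
  cases b <;> cases b' <;> first | rfl | exact absurd rfl h

lemma colorSet_subset_play (p : Pos V) (v : V) (b b' : Bool) :
    p.colorSet b' ⊆ (p.play v b).colorSet b' := by
  by_cases h : b' = b
  · subst h; rw [play_colorSet_self]; exact Set.subset_insert _ _
  · rw [play_colorSet_ne p v h]

lemma not_mem_colorSet {p : Pos V} {x : V} (h : x ∉ p.purple ∪ p.blue) (b : Bool) :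
    x ∉ p.colorSet b := by
  cases b
  · rw [colorSet_false]; exact fun hx => h (Or.inr hx)
  · rw [colorSet_true]; exact fun hx => h (Or.inl hx)

lemma disjoint_colorSet {p : Pos V} (h : Disjoint p.purple p.blue) (b : Bool) :
    Disjoint (p.colorSet b) (p.colorSet (!b)) := by
  cases b
  · exact h.symm
  · exact h

/-- The invariant: colors disjoint, and either every vertex of `K` is dominated in
both colors, or there is an uncolored `u' ∈ K` whose addition to color `c` would
dominate all of `K` in both colors. -/
def Inv (G : SimpleGraph V) (K : G.ConnectedComponent) (c : Bool) (p : Pos V) : Prop :=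
  Disjoint p.purple p.blue ∧
  ((∀ w ∈ K.supp, ∀ b : Bool, (closedNbhd G w ∩ p.colorSet b).Nonempty) ∨
   (∃ u', u' ∈ K.supp ∧ u' ∉ p.purple ∪ p.blue ∧
     ∀ w ∈ K.supp, (closedNbhd G w ∩ p.colorSet (!c)).Nonempty ∧
       (closedNbhd G w ∩ insert u' (p.colorSet c)).Nonempty))

lemma play_mem_union {p : Pos V} {x v : V} (b : Bool)
    (hx : x ∈ (p.play v b).purple ∪ (p.play v b).blue) (hxv : x ≠ v) :
    x ∈ p.purple ∪ p.blue := by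
  cases b
  · rw [play_false] at hx
    rcases hx with hx | hx
    · exact Or.inl hx
    · rcases hx with rfl | hx
      · exact absurd rfl hxv
      · exact Or.inr hx
  · rw [play_true] at hx
    rcases hx with hx | hx
    · rcases hx with rfl | hx
      · exact absurd rfl hxv
      · exact Or.inl hx
    · exact Or.inr hx

lemma disjoint_play {p : Pos V} {v : V} (b : Bool)
    (hd : Disjoint p.purple p.blue) (hv : v ∉ p.purple ∪ p.blue) :
    Disjoint (p.play v b).purple (p.play v b).blue := by
  rw [Set.disjoint_left] at hd ⊢
  cases b
  · rw [play_false]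
    intro a ha ha'
    rcases ha' with rfl | ha'
    · exact hv (Or.inl ha)
    · exact hd ha ha'
  · rw [play_true]
    intro a ha ha'
    rcases ha with rfl | ha
    · exact hv (Or.inr ha')
    · exact hd ha ha'

lemma Inv_step {G : SimpleGraph V} {K : G.ConnectedComponent} {c : Bool} {p q : Pos V}
    (hInv : Inv G K c p) (hst : Step G p q) : Inv G K c q := by
  obtain ⟨hdisj, hcase⟩ := hInv
  obtain ⟨v, c', ⟨hvunc, x, hxN, hxund⟩, rfl⟩ := hst
  refine ⟨disjoint_play c' hdisj hvunc, ?_⟩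
  rcases hcase with ha | ⟨u', hu's, hu'unc, hb⟩
  · -- case (a) persists by monotonicity
    left
    intro w hw b
    exact (ha w hw b).mono (Set.inter_subset_inter_right _ (colorSet_subset_play p v c' b))
  · by_cases hvu : v = u'
    · -- the witness itself gets colored; the color must be `c`
      have hc' : c' = c := by
        by_contra hne
        have hxK : x ∈ K.supp :=
          mem_supp_of_mem_closedNbhd (hvu ▸ hu's) hxN
        have hc'' : c' = !c := by cases c <;> cases c' <;> simp_all
        rw [hc''] at hxund
        obtain ⟨y, hy⟩ := (hb x hxK).1
        rw [hxund] at hy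
        exact hy
      left
      intro w hw b
      by_cases hbc : b = c
      · have : (p.play v c').colorSet b = insert u' (p.colorSet c) := by
          rw [hbc, ← hc', play_colorSet_self, hvu, hc']
        rw [this]
        exact (hb w hw).2
      · have hbc' : b = !c := by cases c <;> cases b <;> simp_all
        rw [play_colorSet_ne p v (by rw [hc']; exact hbc), hbc']
        exact (hb w hw).1
    · -- witness unaffected; monotonicity
      right
      refine ⟨u', hu's, fun h => hu'unc (play_mem_union c' h (fun he => hvu he.symm)),
        fun w hw => ⟨?_, ?_⟩⟩
      · exact (hb w hw).1.mono
          (Set.inter_subset_inter_right _ (colorSet_subset_play p v c' (!c)))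
      · exact (hb w hw).2.mono (Set.inter_subset_inter_right _
          (Set.insert_subset_insert (colorSet_subset_play p v c' c)))

lemma Inv_no_mono {G : SimpleGraph V} {K : G.ConnectedComponent} {c : Bool} {p : Pos V}
    (hInv : Inv G K c p) : ∀ w ∈ K.supp,
      ¬ (closedNbhd G w ⊆ p.purple ∨ closedNbhd G w ⊆ p.blue) := by
  obtain ⟨hdisj, hcase⟩ := hInv
  intro w hw hmono
  obtain ⟨b, hsub⟩ : ∃ b : Bool, closedNbhd G w ⊆ p.colorSet b := by
    rcases hmono with h | h
    · exact ⟨true, h⟩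
    · exact ⟨false, h⟩
  rcases hcase with ha | ⟨u', _, hu'unc, hb⟩
  · obtain ⟨y, hy1, hy2⟩ := ha w hw (!b)
    exact (disjoint_colorSet hdisj b).ne_of_mem (hsub hy1) hy2 rfl
  · by_cases hbc : b = c
    · obtain ⟨y, hy1, hy2⟩ := (hb w hw).1
      have : y ∈ p.colorSet b := hsub hy1
      rw [hbc] at this
      exact (disjoint_colorSet hdisj c).ne_of_mem this hy2 rfl
    · have hbc' : b = !c := by cases c <;> cases b <;> simp_all
      obtain ⟨y, hy1, hy2⟩ := (hb w hw).2
      rcases hy2 with rfl | hy2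
      · exact not_mem_colorSet hu'unc b (hsub hy1)
      · have hyb : y ∈ p.colorSet (!c) := by rw [← hbc']; exact hsub hy1
        exact (disjoint_colorSet hdisj c).ne_of_mem hy2 hyb rfl

end DDG

/-- Lemma "safe-comp" of the paper: if in a position of the
Disjoint Domination Game on a finite isolate-free graph there is an uncolored vertex
`u` of a connected component `C` such that adding `u` to the class of color `c`
would leave every vertex of `C` dominated in both colors, then no sequence of legal
moves ever produces a monochromatic closed neighborhood inside `C`. -/
theorem statement10 {V : Type*} [Fintype V] (G : SimpleGraph V)
    (hiso : ∀ v : V, ∃ u : V, G.Adj v u)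
    (Vp Vb : Set V) (hdisj : Disjoint Vp Vb)
    (K : G.ConnectedComponent) (c : Bool)
    (u : V) (hu : u ∈ K.supp) (hunc : u ∉ Vp ∪ Vb)
    (hdom : ∀ w ∈ K.supp,
      (closedNbhd G w ∩ (Pos.mk Vp Vb).colorSet (!c)).Nonempty ∧
      (closedNbhd G w ∩ insert u ((Pos.mk Vp Vb).colorSet c)).Nonempty) :
    ∀ p' : Pos V, Reach G ⟨Vp, Vb⟩ p' →
      ∀ w ∈ K.supp, ¬ (closedNbhd G w ⊆ p'.purple ∨ closedNbhd G w ⊆ p'.blue) := by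
  intro p' hreach w hw
  have hInv : Inv G K c p' := by
    induction hreach with
    | refl => exact ⟨hdisj, Or.inr ⟨u, hu, hunc, hdom⟩⟩
    | tail _ hst ih => exact Inv_step ih hst
  exact Inv_no_mono hInv w hw
end

section
/- If a finite simple graph G has a perfect matching, then Dom has a winning strategy in the Bicolored Domination Game on G, in both the Sepy-start and the Dom-start versions. -/
namespace DDG
/-- A legal move in the Bicolored Domination Game for the player of color `c`
(`true` = purple = Dom, `false` = blue = Sepy): select an uncolored vertex `v`
such that some `u ∈ N[v]` is not yet dominated in color `c`. -/
def LegalBDG (G : SimpleGraph V) (p : Pos V) (c : Bool) (v : V) : Prop :=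
  v ∉ p.purple ∪ p.blue ∧ ∃ u ∈ closedNbhd G v, closedNbhd G u ∩ p.colorSet c = ∅

/-- End condition ⟨d**⟩ of the Bicolored Domination Game: for some color `c`,
`V_c` dominates all vertices and no closed neighborhood is contained in `V_c`. -/
def DStarEnd (G : SimpleGraph V) (p : Pos V) : Prop :=
  ∃ c : Bool, Dominates G (p.colorSet c) ∧ ∀ v : V, ¬ closedNbhd G v ⊆ p.colorSet c

/-- `DomWinsBDG G turn p` : Dom has a winning strategy in the Bicolored Domination
Game from position `p`, where `turn = true` iff it is Dom's move.  Dom colors only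
purple (`true`), Sepy only blue (`false`); a player whose turn it is must make a
legal move if he has one, and otherwise his turn is skipped.  Sepy wins as soon as
some closed neighborhood is monochromatic; Dom wins if the game ends (no player has
a legal move) with ⟨d**⟩. -/
inductive DomWinsBDG (G : SimpleGraph V) : Bool → Pos V → Prop
  | terminal (turn : Bool) (p : Pos V) :
      ¬ SepyEnd G p →
      (¬ ∃ v, LegalBDG G p true v) → (¬ ∃ v, LegalBDG G p false v) →
      DStarEnd G p → DomWinsBDG G turn p
  | domStep (p : Pos V) (v : V) :
      ¬ SepyEnd G p → LegalBDG G p true v →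
      DomWinsBDG G false (p.play v true) → DomWinsBDG G true p
  | domSkip (p : Pos V) :
      ¬ SepyEnd G p → (¬ ∃ v, LegalBDG G p true v) → (∃ v, LegalBDG G p false v) →
      DomWinsBDG G false p → DomWinsBDG G true p
  | sepyStep (p : Pos V) :
      ¬ SepyEnd G p → (∃ v, LegalBDG G p false v) →
      (∀ v, LegalBDG G p false v → DomWinsBDG G true (p.play v false)) →
      DomWinsBDG G false p
  | sepySkip (p : Pos V) :
      ¬ SepyEnd G p → (¬ ∃ v, LegalBDG G p false v) → (∃ v, LegalBDG G p true v) →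
      DomWinsBDG G true p → DomWinsBDG G false p
end DDG

open DDG


namespace PMAux

open DDG

variable {V : Type*} (G : SimpleGraph V) (f : V → V)

lemma mem_cn {u v : V} : u ∈ closedNbhd G v ↔ u = v ∨ G.Adj v u := by
  simp [closedNbhd]

lemma self_mem_cn (v : V) : v ∈ closedNbhd G v := by simp [closedNbhd]

lemma cs_true (p : Pos V) : p.colorSet true = p.purple := rfl
lemma cs_false (p : Pos V) : p.colorSet false = p.blue := rfl
lemma play_true (p : Pos V) (v : V) : p.play v true = ⟨insert v p.purple, p.blue⟩ := rfl
lemma play_false (p : Pos V) (v : V) : p.play v false = ⟨p.purple, insert v p.blue⟩ := rfl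

/-- basic invariant -/
def Inv0 (p : Pos V) : Prop :=
  p.purple ∩ p.blue = ∅ ∧ (∀ v ∈ p.purple, f v ∉ p.purple) ∧
    ∀ v ∈ p.blue, f v ∈ p.blue → (closedNbhd G v ∩ p.purple).Nonempty

/-- a pending blue vertex: its partner is uncolored -/
def Pend (p : Pos V) (v : V) : Prop := v ∈ p.blue ∧ f v ∉ p.purple ∪ p.blue

/-- a safe pair: both closed neighborhoods meet purple -/
def Safe (p : Pos V) (v : V) : Prop :=
  (closedNbhd G v ∩ p.purple).Nonempty ∧ (closedNbhd G (f v) ∩ p.purple).Nonempty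

/-- invariant at Sepy's turn -/
def InvS (p : Pos V) : Prop := Inv0 G f p ∧ ∀ v, Pend f p v → Safe G f p v

/-- invariant at Dom's turn: at most one unsafe pending -/
def InvD (p : Pos V) : Prop := Inv0 G f p ∧
  ∀ v w, Pend f p v → ¬ Safe G f p v → Pend f p w → ¬ Safe G f p w → v = w

variable {G f}

lemma invS_invD {p : Pos V} (h : InvS G f p) : InvD G f p :=
  ⟨h.1, fun v w hv hv' _ _ => absurd (h.2 v hv) hv'⟩

section
variable (hadj : ∀ v, G.Adj v (f v)) (hinv : ∀ v, f (f v) = v)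
include hadj

lemma fv_ne (v : V) : f v ≠ v := fun h => G.irrefl (h ▸ hadj v)

lemma no_sepyEnd {p : Pos V} (h : Inv0 G f p) : ¬ SepyEnd G p := by
  rintro ⟨v, hv | hv⟩
  · exact h.2.1 v (hv (self_mem_cn G v)) (hv ((mem_cn G).2 (Or.inr (hadj v))))
  · obtain ⟨x, hx1, hx2⟩ := h.2.2 v (hv (self_mem_cn G v))
      (hv ((mem_cn G).2 (Or.inr (hadj v))))
    have : x ∈ p.purple ∩ p.blue := ⟨hx2, hv hx1⟩
    rw [h.1] at this; exact this

/-- if Dom has no legal move, every vertex is purple-dominated -/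
lemma dominates_of_noDomLegal {p : Pos V} (h : Inv0 G f p)
    (hnd : ¬ ∃ v, LegalBDG G p true v) : Dominates G p.purple := by
  intro x
  by_contra hx
  rw [Set.not_nonempty_iff_eq_empty] at hx
  by_cases hxc : x ∈ p.purple ∪ p.blue
  · rcases hxc with hxp | hxb
    · have : x ∈ closedNbhd G x ∩ p.purple := ⟨self_mem_cn G x, hxp⟩
      rw [hx] at this; exact this
    · have hfx : f x ∉ p.purple := by
        intro hc
        have : f x ∈ closedNbhd G x ∩ p.purple := ⟨(mem_cn G).2 (Or.inr (hadj x)), hc⟩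
        rw [hx] at this; exact this
      by_cases hfxb : f x ∈ p.blue
      · obtain ⟨y, hy⟩ := h.2.2 x hxb hfxb
        rw [hx] at hy; exact hy
      · refine hnd ⟨f x, ?_, x, (mem_cn G).2 (Or.inr (hadj x).symm), hx⟩
        rintro (hc | hc)
        · exact hfx hc
        · exact hfxb hc
  · exact hnd ⟨x, hxc, x, self_mem_cn G x, hx⟩

lemma dstar_of_noDomLegal {p : Pos V} (h : Inv0 G f p)
    (hnd : ¬ ∃ v, LegalBDG G p true v) : DStarEnd G p := by
  refine ⟨true, dominates_of_noDomLegal hadj h hnd, fun v hv => ?_⟩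
  exact h.2.1 v (hv (self_mem_cn G v)) (hv ((mem_cn G).2 (Or.inr (hadj v))))

/-- an unsafe pending vertex gives Dom a legal pairing move -/
lemma legal_of_unsafe {p : Pos V} {v : V} (hp : Pend f p v) (hs : ¬ Safe G f p v) :
    LegalBDG G p true (f v) := by
  refine ⟨hp.2, ?_⟩
  by_contra hc
  push_neg at hc
  exact hs ⟨hc v ((mem_cn G).2 (Or.inr (hadj v).symm)), hc (f v) (self_mem_cn G (f v))⟩

/-- if Dom has no legal move at his turn, all pendings are safe -/
lemma invS_of_noDomLegal {p : Pos V} (h : InvD G f p)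
    (hnd : ¬ ∃ v, LegalBDG G p true v) : InvS G f p := by
  refine ⟨h.1, fun v hv => ?_⟩
  by_contra hs
  exact hnd ⟨f v, legal_of_unsafe hadj hv hs⟩

include hinv

/-- Sepy's moves preserve the invariant -/
lemma sepy_move {p : Pos V} (h : InvS G f p) {v : V}
    (hl : LegalBDG G p false v) : InvD G f (p.play v false) := by
  obtain ⟨⟨h1, h2, h3⟩, hsafe⟩ := h
  obtain ⟨hv, _⟩ := hl
  rw [play_false]
  have hvp : v ∉ p.purple := fun hc => hv (Or.inl hc)
  have hvb : v ∉ p.blue := fun hc => hv (Or.inr hc)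
  refine ⟨⟨?_, h2, ?_⟩, ?_⟩
  · ext x
    simp only [Set.mem_inter_iff, Set.mem_insert_iff, Set.mem_empty_iff_false, iff_false,
      not_and]
    rintro hx (rfl | hxb)
    · exact hvp hx
    · have : x ∈ p.purple ∩ p.blue := ⟨hx, hxb⟩
      rw [h1] at this; exact this
  · rintro w (rfl | hw) hfw
    · rcases hfw with hfw | hfw
      · exact absurd hfw (fv_ne hadj w)
      · have hpend : Pend f p (f w) := by
          refine ⟨hfw, ?_⟩
          rw [hinv w]
          exact hv
        have := (hsafe _ hpend).2
        rwa [hinv w] at this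
    · rcases hfw with hfw | hfw
      · exact (hsafe w ⟨hw, by rw [hfw]; exact hv⟩).1
      · exact h3 w hw hfw
  · -- uniqueness of unsafe pending: must be v
    have key : ∀ w, Pend f ⟨p.purple, insert v p.blue⟩ w →
        ¬ Safe G f ⟨p.purple, insert v p.blue⟩ w → w = v := by
      intro w hw hws
      by_contra hne
      rcases hw.1 with rfl | hwb
      · exact hne rfl
      · have hpend : Pend f p w := by
          refine ⟨hwb, fun hc => hw.2 ?_⟩
          rcases hc with hc | hc
          · exact Or.inl hc
          · exact Or.inr (Or.inr hc)
        exact hws (hsafe w hpend)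
    intro a b ha ha' hb hb'
    rw [key a ha ha', key b hb hb']

/-- Dom has a good move whenever he has any legal move -/
lemma dom_move {p : Pos V} (h : InvD G f p) (hex : ∃ v, LegalBDG G p true v) :
    ∃ v, LegalBDG G p true v ∧ InvS G f (p.play v true) := by
  obtain ⟨⟨h1, h2, h3⟩, huniq⟩ := h
  by_cases hun : ∃ v, Pend f p v ∧ ¬ Safe G f p v
  · -- respond to the unique unsafe pending vertex
    obtain ⟨v, hv, hvs⟩ := hun
    have hleg := legal_of_unsafe hadj hv hvs
    refine ⟨f v, hleg, ?_⟩
    rw [play_true]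
    have hfvp : f v ∉ p.purple := fun hc => hv.2 (Or.inl hc)
    have hfvb : f v ∉ p.blue := fun hc => hv.2 (Or.inr hc)
    have hvnp : v ∉ p.purple := by
      intro hc
      have : v ∈ p.purple ∩ p.blue := ⟨hc, hv.1⟩
      rw [h1] at this; exact this
    refine ⟨⟨?_, ?_, ?_⟩, ?_⟩
    · ext x
      simp only [Set.mem_inter_iff, Set.mem_insert_iff, Set.mem_empty_iff_false, iff_false,
        not_and]
      rintro (rfl | hx) hxb
      · exact hfvb hxb
      · have : x ∈ p.purple ∩ p.blue := ⟨hx, hxb⟩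
        rw [h1] at this; exact this
    · rintro w (rfl | hw)
      · rw [hinv v]
        rintro (hc | hc)
        · exact fv_ne hadj v hc.symm
        · exact hvnp hc
      · rintro (hc | hc)
        · have : w = v := by
            have := congrArg f hc
            rwa [hinv, hinv] at this
          subst this
          have : w ∈ p.purple ∩ p.blue := ⟨hw, hv.1⟩
          rw [h1] at this; exact this
        · exact h2 w hw hc
    · intro w hw hfw
      obtain ⟨x, hx1, hx2⟩ := h3 w hw hfw
      exact ⟨x, hx1, Or.inr hx2⟩
    · intro w hw
      have hwpend : Pend f p w := by
        refine ⟨hw.1, fun hc => hw.2 ?_⟩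
        rcases hc with hc | hc
        · exact Or.inl (Or.inr hc)
        · exact Or.inr hc
      have hwsafe : Safe G f p w := by
        by_contra hws
        have : w = v := huniq w v hwpend hws hv hvs
        subst this
        exact hw.2 (Or.inl (Or.inl rfl))
      obtain ⟨⟨x, hx1, hx2⟩, ⟨y, hy1, hy2⟩⟩ := hwsafe
      exact ⟨⟨x, hx1, Or.inr hx2⟩, ⟨y, hy1, Or.inr hy2⟩⟩
  · -- all pendings safe: extract a good move from any legal move
    push_neg at hun
    obtain ⟨z, hz1, u, hu1, hu2⟩ := hex
    have hunp : u ∉ p.purple := fun hc => by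
      have : u ∈ closedNbhd G u ∩ p.colorSet true := ⟨self_mem_cn G u, hc⟩
      rw [hu2] at this; exact this
    have hfup : f u ∉ p.purple := fun hc => by
      have : f u ∈ closedNbhd G u ∩ p.colorSet true :=
        ⟨(mem_cn G).2 (Or.inr (hadj u)), hc⟩
      rw [hu2] at this; exact this
    have hunb : u ∉ p.blue := by
      intro hub
      by_cases hfub : f u ∈ p.blue
      · obtain ⟨x, hx⟩ := h3 u hub hfub
        have : x ∈ closedNbhd G u ∩ p.colorSet true := hx
        rw [hu2] at this; exact this
      · have hpend : Pend f p u := ⟨hub, by rintro (hc | hc); exacts [hfup hc, hfub hc]⟩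
        obtain ⟨x, hx⟩ := (hun u hpend).1
        have : x ∈ closedNbhd G u ∩ p.colorSet true := hx
        rw [hu2] at this; exact this
    refine ⟨u, ⟨by rintro (hc | hc); exacts [hunp hc, hunb hc], u, self_mem_cn G u, hu2⟩, ?_⟩
    rw [play_true]
    refine ⟨⟨?_, ?_, ?_⟩, ?_⟩
    · ext x
      simp only [Set.mem_inter_iff, Set.mem_insert_iff, Set.mem_empty_iff_false, iff_false,
        not_and]
      rintro (rfl | hx) hxb
      · exact hunb hxb
      · have : x ∈ p.purple ∩ p.blue := ⟨hx, hxb⟩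
        rw [h1] at this; exact this
    · rintro w (rfl | hw)
      · rintro (hc | hc)
        · exact fv_ne hadj w hc
        · exact hfup hc
      · rintro (hc | hc)
        · have : w = f u := by
            have := congrArg f hc
            rwa [hinv] at this
          exact hfup (this ▸ hw)
        · exact h2 w hw hc
    · intro w hw hfw
      obtain ⟨x, hx1, hx2⟩ := h3 w hw hfw
      exact ⟨x, hx1, Or.inr hx2⟩
    · intro w hw
      have hwpend : Pend f p w := by
        refine ⟨hw.1, fun hc => hw.2 ?_⟩
        rcases hc with hc | hc
        · exact Or.inl (Or.inr hc)
        · exact Or.inr hc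
      obtain ⟨⟨x, hx1, hx2⟩, ⟨y, hy1, hy2⟩⟩ := hun w hwpend
      exact ⟨⟨x, hx1, Or.inr hx2⟩, ⟨y, hy1, Or.inr hy2⟩⟩

end

/-- set of uncolored vertices -/
def unc (p : Pos V) : Set V := (p.purple ∪ p.blue)ᶜ

lemma unc_play (p : Pos V) (v : V) (c : Bool) : unc (p.play v c) = unc p \ {v} := by
  cases c <;> · ext x; simp [unc, Pos.play]; tauto

lemma ncard_play [Fintype V] {p : Pos V} {v : V} {n : ℕ} (hv : v ∉ p.purple ∪ p.blue)
    (hn : (unc p).ncard ≤ n + 1) (c : Bool) : (unc (p.play v c)).ncard ≤ n := by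
  rw [unc_play]
  have hvu : v ∈ unc p := hv
  have := Set.ncard_diff_singleton_lt_of_mem hvu (Set.toFinite _)
  omega

variable (hadj : ∀ v, G.Adj v (f v)) (hinv : ∀ v, f (f v) = v)
include hadj hinv

lemma main [Fintype V] : ∀ n (p : Pos V), (unc p).ncard ≤ n →
    (InvD G f p → DomWinsBDG G true p) ∧ (InvS G f p → DomWinsBDG G false p) := by
  intro n
  induction n with
  | zero =>
    intro p hn
    have hempty : unc p = ∅ := by
      have := Set.toFinite (unc p)
      rw [← Set.ncard_eq_zero this]
      omega
    have noleg : ∀ c, ¬ ∃ v, LegalBDG G p c v := by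
      rintro c ⟨v, hv, -⟩
      have : v ∈ unc p := hv
      rw [hempty] at this; exact this
    constructor
    · intro h
      exact .terminal true p (no_sepyEnd hadj h.1) (noleg true) (noleg false)
        (dstar_of_noDomLegal hadj h.1 (noleg true))
    · intro h
      exact .terminal false p (no_sepyEnd hadj h.1) (noleg true) (noleg false)
        (dstar_of_noDomLegal hadj h.1 (noleg true))
  | succ n ih =>
    intro p hn
    constructor
    · -- Dom's turn
      intro h
      by_cases hD : ∃ v, LegalBDG G p true v
      · obtain ⟨v, hv, hinvS⟩ := dom_move hadj hinv h hD
        exact .domStep p v (no_sepyEnd hadj h.1) hv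
          ((ih _ (ncard_play hv.1 hn true)).2 hinvS)
      · have hS' : InvS G f p := invS_of_noDomLegal hadj h hD
        by_cases hS : ∃ v, LegalBDG G p false v
        · refine .domSkip p (no_sepyEnd hadj h.1) hD hS ?_
          refine .sepyStep p (no_sepyEnd hadj h.1) hS fun v hv => ?_
          exact (ih _ (ncard_play hv.1 hn false)).1 (sepy_move hadj hinv hS' hv)
        · exact .terminal true p (no_sepyEnd hadj h.1) hD hS
            (dstar_of_noDomLegal hadj h.1 hD)
    · -- Sepy's turn
      intro h
      by_cases hS : ∃ v, LegalBDG G p false v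
      · refine .sepyStep p (no_sepyEnd hadj h.1) hS fun v hv => ?_
        exact (ih _ (ncard_play hv.1 hn false)).1 (sepy_move hadj hinv h hv)
      · by_cases hD : ∃ v, LegalBDG G p true v
        · refine .sepySkip p (no_sepyEnd hadj h.1) hS hD ?_
          obtain ⟨v, hv, hinvS⟩ := dom_move hadj hinv (invS_invD h) hD
          exact .domStep p v (no_sepyEnd hadj h.1) hv
            ((ih _ (ncard_play hv.1 hn true)).2 hinvS)
        · exact .terminal false p (no_sepyEnd hadj h.1) hD hS
            (dstar_of_noDomLegal hadj h.1 hD)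

end PMAux

/-- Proposition "perfmatch" of the paper: if a finite graph `G`
has a perfect matching, then Dom has a winning strategy in the Bicolored Domination
Game on `G`, in both the Dom-start and the Sepy-start versions. -/
theorem statement12 {V : Type*} [Fintype V] (G : SimpleGraph V)
    (hpm : ∃ M : G.Subgraph, M.IsPerfectMatching) :
    DomWinsBDG G true ⟨∅, ∅⟩ ∧ DomWinsBDG G false ⟨∅, ∅⟩ := by
  obtain ⟨M, hM⟩ := hpm
  choose f hf1 hf2 using fun v => hM.1 (hM.2 v)
  have hadj : ∀ v, G.Adj v (f v) := fun v => M.adj_sub (hf1 v)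
  have hinv : ∀ v, f (f v) = v := fun v => (hf2 (f v) v (hf1 v).symm).symm
  have h0 : PMAux.Inv0 G f ⟨∅, ∅⟩ := ⟨by simp, fun v hv => hv.elim, fun v hv => hv.elim⟩
  have hmain := PMAux.main hadj hinv (PMAux.unc (⟨∅, ∅⟩ : Pos V)).ncard ⟨∅, ∅⟩ le_rfl
  exact ⟨hmain.1 ⟨h0, fun v w hv _ _ _ => absurd hv.1 (Set.notMem_empty v)⟩,
    hmain.2 ⟨h0, fun v hv => absurd hv.1 (Set.notMem_empty v)⟩⟩
end
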